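/- With $h$ as above ($z>0$ fixed, $f$ continuous and positive at $z$, $\sup f<\infty$), if $\sigma_n\to 0$ then for all large $n$ there is a unique $t_n>0$ with $h'(t_n) = -\sigma_n^2$; moreover $t_n \sim 1/(2\sigma_n^2)$ and $h(t_n) = \log\sigma_n + \log[\sqrt{2\pi}\, z f(z)] + o(1)$ as $n\to\infty$. -/

import Mathlib

/-!
Put `g u = f (z + z u)` and `M_k(t) = ∫ u^k e^{-t u²} g(u) du`, so that `h = log (z M₀)` and
`h' = -M₂ / M₀`. Differentiating under the integral sign, `(M₂ / M₀)' = (M₂² - M₄ M₀) / M₀²`,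
which is negative because the variance of `u²` under the weight `e^{-t u²} g(u)` is positive
(`g > 0` near `0`). The substitution `u = s / √t` and dominated convergence give
`t^{(k+1)/2} M_k(t) → g(0) ∫ s^k e^{-s²} ds`, hence `t M₂(t) / M₀(t) → 1/2`. So `M₂ / M₀`
decreases strictly from `M₂(1) / M₀(1)` to `0`, which gives a unique `tₙ` by the intermediate
value theorem and forces `tₙ → ∞`; then `tₙ σₙ² → 1/2` and `√tₙ M₀(tₙ) → √π g(0)`.
-/

open Filter MeasureTheory Set Real Topology

theorem integrable_pow_mul_exp_neg_mul_sq {t : ℝ} (ht : 0 < t) (k : ℕ) :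
    Integrable fun u : ℝ => u ^ k * exp (-t * u ^ 2) := by
  simpa [rpow_natCast] using
    integrable_rpow_mul_exp_neg_mul_sq ht (s := k) (neg_one_lt_zero.trans_le k.cast_nonneg)

theorem existsUnique_pos_eq_of_strictAntiOn {R : ℝ → ℝ} (hR : StrictAntiOn R (Ioi 0))
    (hRc : ContinuousOn R (Ioi 0)) (hlim : Tendsto R atTop (𝓝 0)) {a c : ℝ} (ha : 0 < a)
    (hc : 0 < c) (hca : c < R a) : ∃! t, 0 < t ∧ R t = c := by
  obtain ⟨T, haT, hT⟩ := ((eventually_ge_atTop a).and (hlim.eventually (gt_mem_nhds hc))).exists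
  obtain ⟨t, ht, hRt⟩ := intermediate_value_Icc' haT (hRc.mono fun x hx => ha.trans_le hx.1)
    ⟨hT.le, hca.le⟩
  exact ⟨t, ⟨ha.trans_le ht.1, hRt⟩, fun s ⟨hs, hRs⟩ =>
    hR.injOn hs (ha.trans_le ht.1) (hRs.trans hRt.symm)⟩

theorem tendsto_atTop_of_tendsto_comp_nhds_zero {R : ℝ → ℝ} (hR : AntitoneOn R (Ioi 0))
    (hpos : ∀ t, 0 < t → 0 < R t) {ι : Type*} {l : Filter ι} {x : ι → ℝ}
    (hx : ∀ᶠ i in l, 0 < x i) (hRx : Tendsto (fun i => R (x i)) l (𝓝 0)) :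
    Tendsto x l atTop := by
  refine tendsto_atTop.2 fun M => ?_
  have hM : 0 < max M 1 := lt_max_of_lt_right one_pos
  filter_upwards [hx, hRx.eventually (gt_mem_nhds (hpos _ hM))] with i hxi hRi
  by_contra! hlt
  exact hRi.not_ge (hR hxi hM (hlt.le.trans (le_max_left _ _)))

noncomputable def gaussMoment (g : ℝ → ℝ) (k : ℕ) (t : ℝ) : ℝ :=
  ∫ u, u ^ k * exp (-t * u ^ 2) * g u

noncomputable def gaussMomentRatio (g : ℝ → ℝ) (t : ℝ) : ℝ :=
  gaussMoment g 2 t / gaussMoment g 0 t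

section GaussMoment

variable {g : ℝ → ℝ} {A : ℝ}

theorem integrable_gaussMoment (hg : Measurable g) (hgA : ∀ u, ‖g u‖ ≤ A) (k : ℕ) {t : ℝ}
    (ht : 0 < t) : Integrable fun u : ℝ => u ^ k * exp (-t * u ^ 2) * g u :=
  (integrable_pow_mul_exp_neg_mul_sq ht k).mul_bdd hg.aestronglyMeasurable (ae_of_all _ hgA)

theorem hasDerivAt_gaussMoment (hg : Measurable g) (hgA : ∀ u, ‖g u‖ ≤ A) (k : ℕ) {t : ℝ}
    (ht : 0 < t) : HasDerivAt (gaussMoment g k) (-gaussMoment g (k + 2) t) t := by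
  have key := hasDerivAt_integral_of_dominated_loc_of_deriv_le
    (F := fun x u => u ^ k * exp (-x * u ^ 2) * g u)
    (F' := fun x u => -(u ^ (k + 2) * exp (-x * u ^ 2) * g u))
    (bound := fun u => A * ‖u ^ (k + 2) * exp (-(t / 2) * u ^ 2)‖)
    (Ioi_mem_nhds (half_lt_self ht))
    (Eventually.of_forall fun x => (by fun_prop : Measurable _).aestronglyMeasurable)
    (integrable_gaussMoment hg hgA k ht) (by fun_prop : Measurable _).aestronglyMeasurable
    ?bound ((integrable_pow_mul_exp_neg_mul_sq (half_pos ht) _).norm.const_mul A) ?deriv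
  case bound =>
    refine ae_of_all _ fun u x (hx : t / 2 < x) => ?_
    rw [norm_neg, norm_mul, norm_mul, norm_mul (u ^ (k + 2)), mul_comm A,
      norm_of_nonneg (exp_pos _).le, norm_of_nonneg (exp_pos _).le]
    gcongr
    exact hgA u
  case deriv =>
    refine ae_of_all _ fun u x _ => ?_
    have hx : HasDerivAt (fun x => -x * u ^ 2) (-u ^ 2) x := by
      simpa using (hasDerivAt_neg x).mul_const (u ^ 2)
    exact ((hx.exp.const_mul _).mul_const _).congr_deriv (by ring)
  rw [gaussMoment, ← integral_neg]
  exact key.2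

theorem integral_mul_exp_neg_mul_sq_mul_pos (hg0 : ∀ u, 0 ≤ g u) (hgc : ContinuousAt g 0)
    (hgpos : 0 < g 0) {p : ℝ → ℝ} (hp : 0 ≤ p) {s : Set ℝ} (hs : s.Countable)
    (hps : ∀ u ∉ s, 0 < p u) {t : ℝ} (hint : Integrable fun u => p u * exp (-t * u ^ 2) * g u) :
    0 < ∫ u, p u * exp (-t * u ^ 2) * g u := by
  obtain ⟨a, b, hab, hsub⟩ :=
    mem_nhds_iff_exists_Ioo_subset.mp (hgc.eventually (lt_mem_nhds hgpos))
  have hnonneg u : 0 ≤ p u * exp (-t * u ^ 2) * g u :=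
    mul_nonneg (mul_nonneg (hp u) (exp_pos _).le) (hg0 u)
  rw [integral_pos_iff_support_of_nonneg hnonneg hint]
  calc (0 : ENNReal) < volume (Ioo a b) := by simpa using hab.1.trans hab.2
    _ = volume (Ioo a b \ s) := (measure_sdiff_null (hs.measure_zero _)).symm
    _ ≤ volume (Function.support fun u => p u * exp (-t * u ^ 2) * g u) := by
      exact measure_mono fun u ⟨hu, hus⟩ =>
        (mul_pos (mul_pos (hps u hus) (exp_pos _)) (hsub hu)).ne'

theorem gaussMoment_pos (hg : Measurable g) (hgA : ∀ u, ‖g u‖ ≤ A) (hg0 : ∀ u, 0 ≤ g u)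
    (hgc : ContinuousAt g 0) (hgpos : 0 < g 0) {k : ℕ} (hk : Even k) {t : ℝ} (ht : 0 < t) :
    0 < gaussMoment g k t :=
  integral_mul_exp_neg_mul_sq_mul_pos hg0 hgc hgpos (fun u => hk.pow_nonneg u)
    (countable_singleton 0) (fun _ hu => hk.pow_pos hu) (integrable_gaussMoment hg hgA k ht)

theorem sq_gaussMoment_two_lt_mul (hg : Measurable g) (hgA : ∀ u, ‖g u‖ ≤ A)
    (hg0 : ∀ u, 0 ≤ g u) (hgc : ContinuousAt g 0) (hgpos : 0 < g 0) {t : ℝ} (ht : 0 < t) :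
    gaussMoment g 2 t ^ 2 < gaussMoment g 4 t * gaussMoment g 0 t := by
  have hM0 := gaussMoment_pos hg hgA hg0 hgc hgpos Even.zero ht
  set m := gaussMoment g 2 t / gaussMoment g 0 t
  have hm : m * gaussMoment g 0 t = gaussMoment g 2 t := div_mul_cancel₀ _ hM0.ne'
  clear_value m
  have hint k := integrable_gaussMoment hg hgA k ht
  -- the variance of `u ^ 2` under the weight `exp (-t * u ^ 2) * g u` is positive
  have hexpand : (fun u => (u ^ 2 - m) ^ 2 * exp (-t * u ^ 2) * g u) = fun u =>
      u ^ 4 * exp (-t * u ^ 2) * g u - 2 * m * (u ^ 2 * exp (-t * u ^ 2) * g u)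
        + m ^ 2 * (u ^ 0 * exp (-t * u ^ 2) * g u) := by
    ext u; ring
  have hint42 : Integrable fun u =>
      u ^ 4 * exp (-t * u ^ 2) * g u - 2 * m * (u ^ 2 * exp (-t * u ^ 2) * g u) :=
    (hint 4).sub ((hint 2).const_mul _)
  have hvar : ∫ u, (u ^ 2 - m) ^ 2 * exp (-t * u ^ 2) * g u
      = gaussMoment g 4 t - 2 * m * gaussMoment g 2 t + m ^ 2 * gaussMoment g 0 t := by
    rw [hexpand, integral_add hint42 ((hint 0).const_mul _),
      integral_sub (hint 4) ((hint 2).const_mul _), integral_const_mul, integral_const_mul]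
    rfl
  have hvar_pos : 0 < ∫ u, (u ^ 2 - m) ^ 2 * exp (-t * u ^ 2) * g u := by
    refine integral_mul_exp_neg_mul_sq_mul_pos hg0 hgc hgpos (fun u => sq_nonneg _)
      ((countable_singleton √m).insert (-√m)) (fun u hu => sq_pos_of_ne_zero ?_) ?_
    · refine sub_ne_zero.mpr fun hum => hu ?_
      rw [← hum, sqrt_sq_eq_abs]
      rcases abs_choice u with h | h <;> simp [h]
    · rw [hexpand]
      exact hint42.add ((hint 0).const_mul _)
  have hprod := mul_pos (hvar ▸ hvar_pos) hM0
  linear_combination hprod + (m * gaussMoment g 0 t - gaussMoment g 2 t) * hm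

theorem gaussMomentRatio_pos (hg : Measurable g) (hgA : ∀ u, ‖g u‖ ≤ A) (hg0 : ∀ u, 0 ≤ g u)
    (hgc : ContinuousAt g 0) (hgpos : 0 < g 0) {t : ℝ} (ht : 0 < t) :
    0 < gaussMomentRatio g t :=
  div_pos (gaussMoment_pos hg hgA hg0 hgc hgpos even_two ht)
    (gaussMoment_pos hg hgA hg0 hgc hgpos Even.zero ht)

theorem hasDerivAt_gaussMomentRatio (hg : Measurable g) (hgA : ∀ u, ‖g u‖ ≤ A)
    (hg0 : ∀ u, 0 ≤ g u) (hgc : ContinuousAt g 0) (hgpos : 0 < g 0) {t : ℝ} (ht : 0 < t) :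
    HasDerivAt (gaussMomentRatio g) ((gaussMoment g 2 t ^ 2
      - gaussMoment g 4 t * gaussMoment g 0 t) / gaussMoment g 0 t ^ 2) t := by
  refine ((hasDerivAt_gaussMoment hg hgA 2 ht).div (hasDerivAt_gaussMoment hg hgA 0 ht)
    (gaussMoment_pos hg hgA hg0 hgc hgpos Even.zero ht).ne').congr_deriv ?_
  simp only [Nat.reduceAdd]
  ring

theorem continuousOn_gaussMomentRatio (hg : Measurable g) (hgA : ∀ u, ‖g u‖ ≤ A)
    (hg0 : ∀ u, 0 ≤ g u) (hgc : ContinuousAt g 0) (hgpos : 0 < g 0) :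
    ContinuousOn (gaussMomentRatio g) (Ioi 0) := fun _ ht =>
  (hasDerivAt_gaussMomentRatio hg hgA hg0 hgc hgpos ht).continuousAt.continuousWithinAt

theorem strictAntiOn_gaussMomentRatio (hg : Measurable g) (hgA : ∀ u, ‖g u‖ ≤ A)
    (hg0 : ∀ u, 0 ≤ g u) (hgc : ContinuousAt g 0) (hgpos : 0 < g 0) :
    StrictAntiOn (gaussMomentRatio g) (Ioi 0) := by
  refine strictAntiOn_of_deriv_neg (convex_Ioi 0)
    (continuousOn_gaussMomentRatio hg hgA hg0 hgc hgpos) fun t ht => ?_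
  rw [interior_Ioi] at ht
  rw [(hasDerivAt_gaussMomentRatio hg hgA hg0 hgc hgpos ht).deriv]
  exact div_neg_of_neg_of_pos (sub_neg.mpr (sq_gaussMoment_two_lt_mul hg hgA hg0 hgc hgpos ht))
    (pow_pos (gaussMoment_pos hg hgA hg0 hgc hgpos Even.zero ht) 2)

theorem sqrt_pow_mul_gaussMoment (k : ℕ) {t : ℝ} (ht : 0 < t) :
    √t ^ (k + 1) * gaussMoment g k t = gaussMoment (fun s => g (s / √t)) k 1 := by
  have hst : 0 < √t := sqrt_pos.mpr ht
  have hscale : ∀ s : ℝ, s ^ k * exp (-1 * s ^ 2) * g (s / √t)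
      = √t ^ k * ((s / √t) ^ k * exp (-t * (s / √t) ^ 2) * g (s / √t)) := by
    intro s
    rw [div_pow, div_pow, sq_sqrt ht.le]
    field_simp
  simp_rw [gaussMoment, hscale, integral_const_mul,
    Measure.integral_comp_div (fun u => u ^ k * exp (-t * u ^ 2) * g u), abs_of_pos hst,
    smul_eq_mul]
  ring

theorem tendsto_gaussMoment_of_tendsto {ι : Type*} {l : Filter ι} [l.IsCountablyGenerated]
    {G : ι → ℝ → ℝ} (hG : ∀ i, Measurable (G i)) (hGA : ∀ i u, ‖G i u‖ ≤ A)
    (hlim : ∀ u, Tendsto (fun i => G i u) l (𝓝 (g u))) (k : ℕ) {t : ℝ} (ht : 0 < t) :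
    Tendsto (fun i => gaussMoment (G i) k t) l (𝓝 (gaussMoment g k t)) :=
  tendsto_integral_filter_of_dominated_convergence (fun u => ‖u ^ k * exp (-t * u ^ 2)‖ * A)
    (Eventually.of_forall fun i =>
      (integrable_gaussMoment (hG i) (hGA i) k ht).aestronglyMeasurable)
    (Eventually.of_forall fun i => ae_of_all _ fun u => by
      rw [norm_mul]
      gcongr
      exact hGA i u)
    ((integrable_pow_mul_exp_neg_mul_sq ht k).norm.mul_const A)
    (ae_of_all _ fun u => (hlim u).const_mul _)

theorem tendsto_sqrt_pow_mul_gaussMoment (hg : Measurable g) (hgA : ∀ u, ‖g u‖ ≤ A)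
    (hgc : ContinuousAt g 0) (k : ℕ) :
    Tendsto (fun t => √t ^ (k + 1) * gaussMoment g k t) atTop
      (𝓝 (gaussMoment (fun _ => 1) k 1 * g 0)) := by
  have hlim : ∀ s, Tendsto (fun t => g (s / √t)) atTop (𝓝 (g 0)) := fun s =>
    hgc.tendsto.comp (tendsto_const_nhds.div_atTop tendsto_sqrt_atTop)
  have key : Tendsto (fun t => gaussMoment (fun s => g (s / √t)) k 1) atTop
      (𝓝 (gaussMoment (fun _ => g 0) k 1)) :=
    tendsto_gaussMoment_of_tendsto (fun t => hg.comp (measurable_id.div_const √t))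
      (fun _ _ => hgA _) hlim k one_pos
  have hconst : gaussMoment (fun _ => g 0) k 1 = gaussMoment (fun _ => 1) k 1 * g 0 := by
    simp only [gaussMoment, mul_one, integral_mul_const]
  rw [hconst] at key
  refine key.congr' ?_
  filter_upwards [eventually_gt_atTop 0] with t ht
  exact (sqrt_pow_mul_gaussMoment k ht).symm

theorem gaussMoment_one_zero (t : ℝ) : gaussMoment (fun _ => 1) 0 t = √(π / t) := by
  simp only [gaussMoment, pow_zero, one_mul, mul_one]
  exact integral_gaussian t

theorem gaussMoment_one_two_one : gaussMoment (fun _ => 1) 2 1 = √π / 2 := by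
  have h1 := hasDerivAt_gaussMoment (g := fun _ => 1) (A := 1) measurable_const (by simp) 0 one_pos
  have h2 : HasDerivAt (fun t => √(π / t)) (-(√π / 2)) 1 := by
    have h : HasDerivAt (fun t => π / t) (-π) 1 := by
      simpa [div_eq_mul_inv] using (hasDerivAt_inv one_ne_zero).const_mul π
    convert h.sqrt (by simp [pi_ne_zero]) using 1
    rw [div_one, neg_div, mul_comm, ← div_div, div_sqrt]
  rw [show gaussMoment (fun _ => 1) 0 = fun t => √(π / t) from funext gaussMoment_one_zero] at h1
  linarith [h1.unique h2]

theorem tendsto_mul_gaussMomentRatio (hg : Measurable g) (hgA : ∀ u, ‖g u‖ ≤ A)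
    (hgc : ContinuousAt g 0) (hgpos : 0 < g 0) :
    Tendsto (fun t => t * gaussMomentRatio g t) atTop (𝓝 (1 / 2)) := by
  have h0 := tendsto_sqrt_pow_mul_gaussMoment hg hgA hgc 0
  have h2 := tendsto_sqrt_pow_mul_gaussMoment hg hgA hgc 2
  simp only [gaussMoment_one_zero, div_one, zero_add, pow_one] at h0
  rw [gaussMoment_one_two_one] at h2
  convert (h2.div h0 (by positivity)).congr' ?_ using 2
  · field_simp
  filter_upwards [eventually_gt_atTop 0] with t ht
  rw [Pi.div_apply, gaussMomentRatio, pow_succ, sq_sqrt ht.le]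
  field_simp

theorem tendsto_gaussMomentRatio_atTop (hg : Measurable g) (hgA : ∀ u, ‖g u‖ ≤ A)
    (hgc : ContinuousAt g 0) (hgpos : 0 < g 0) :
    Tendsto (gaussMomentRatio g) atTop (𝓝 0) := by
  refine ((tendsto_mul_gaussMomentRatio hg hgA hgc hgpos).div_atTop tendsto_id).congr' ?_
  filter_upwards [eventually_gt_atTop 0] with t ht
  rw [id, mul_div_cancel_left₀ _ ht.ne']

theorem tendsto_gaussMoment_div_sqrt_gaussMomentRatio (hg : Measurable g)
    (hgA : ∀ u, ‖g u‖ ≤ A) (hgc : ContinuousAt g 0) (hgpos : 0 < g 0) :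
    Tendsto (fun t => gaussMoment g 0 t / √(gaussMomentRatio g t)) atTop
      (𝓝 (√(2 * π) * g 0)) := by
  have h0 := tendsto_sqrt_pow_mul_gaussMoment hg hgA hgc 0
  simp only [gaussMoment_one_zero, div_one, zero_add, pow_one] at h0
  have hR := (tendsto_mul_gaussMomentRatio hg hgA hgc hgpos).sqrt
  convert (h0.div hR (by positivity)).congr' ?_ using 2
  · rw [sqrt_mul' _ pi_pos.le, sqrt_div' _ two_pos.le, sqrt_one]
    field_simp
  filter_upwards [eventually_gt_atTop 0] with t ht
  have hst : 0 < √t := sqrt_pos.mpr ht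
  rw [Pi.div_apply, sqrt_mul ht.le, mul_div_mul_left _ _ hst.ne']

theorem eventually_existsUnique_gaussMomentRatio_eq (hg : Measurable g)
    (hgA : ∀ u, ‖g u‖ ≤ A) (hg0 : ∀ u, 0 ≤ g u) (hgc : ContinuousAt g 0) (hgpos : 0 < g 0)
    {ι : Type*} {l : Filter ι} {c : ι → ℝ} (hc0 : ∀ i, 0 < c i) (hc : Tendsto c l (𝓝 0)) :
    ∀ᶠ i in l, ∃! t, 0 < t ∧ gaussMomentRatio g t = c i := by
  filter_upwards [hc.eventually (gt_mem_nhds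
    (gaussMomentRatio_pos hg hgA hg0 hgc hgpos one_pos))] with i hi
  exact existsUnique_pos_eq_of_strictAntiOn (strictAntiOn_gaussMomentRatio hg hgA hg0 hgc hgpos)
    (continuousOn_gaussMomentRatio hg hgA hg0 hgc hgpos)
    (tendsto_gaussMomentRatio_atTop hg hgA hgc hgpos) one_pos (hc0 i) hi

theorem deriv_log_mul_gaussMoment (hg : Measurable g) (hgA : ∀ u, ‖g u‖ ≤ A)
    (hg0 : ∀ u, 0 ≤ g u) (hgc : ContinuousAt g 0) (hgpos : 0 < g 0) {z : ℝ} (hz : z ≠ 0)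
    {t : ℝ} (ht : 0 < t) :
    deriv (fun t => log (z * gaussMoment g 0 t)) t = -gaussMomentRatio g t := by
  have hM0 := gaussMoment_pos hg hgA hg0 hgc hgpos Even.zero ht
  rw [(((hasDerivAt_gaussMoment hg hgA 0 ht).const_mul z).log (mul_ne_zero hz hM0.ne')).deriv,
    mul_div_mul_left _ _ hz, neg_div, gaussMomentRatio]

theorem tendsto_log_mul_gaussMoment_sub_log_sqrt (hg : Measurable g) (hgA : ∀ u, ‖g u‖ ≤ A)
    (hg0 : ∀ u, 0 ≤ g u) (hgc : ContinuousAt g 0) (hgpos : 0 < g 0) {z : ℝ} (hz : z ≠ 0) :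
    Tendsto (fun t => log (z * gaussMoment g 0 t) - log √(gaussMomentRatio g t)
      - log (√(2 * π) * z * g 0)) atTop (𝓝 0) := by
  have hlim := ((continuousAt_log (by positivity)).tendsto.comp
    (tendsto_gaussMoment_div_sqrt_gaussMomentRatio hg hgA hgc hgpos)).sub_const
    (log (√(2 * π) * g 0))
  rw [sub_self] at hlim
  refine hlim.congr' ?_
  filter_upwards [eventually_gt_atTop 0] with t ht
  have hM0 := gaussMoment_pos hg hgA hg0 hgc hgpos Even.zero ht
  have hR := sqrt_pos.mpr (gaussMomentRatio_pos hg hgA hg0 hgc hgpos ht)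
  rw [Function.comp, log_div hM0.ne' hR.ne', log_mul hz hM0.ne',
    show √(2 * π) * z * g 0 = z * (√(2 * π) * g 0) by ring, log_mul hz (by positivity)]
  ring

end GaussMoment

theorem stmt_12_general (f : ℝ → ℝ) (hmeas : Measurable f) (hnonneg : ∀ x, 0 ≤ f x)
    (hbdd : ∃ A, ∀ x, f x ≤ A)
    (z : ℝ) (hz : 0 < z) (hcont : ContinuousAt f z) (hfz : 0 < f z)
    (h : ℝ → ℝ)
    (hdef : ∀ t, h t = Real.log (z * ∫ u, Real.exp (-t * u ^ 2) * f (z + z * u)))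
    (σ : ℕ → ℝ) (hσpos : ∀ n, 0 < σ n) (hσ0 : Tendsto σ atTop (nhds 0)) :
    (∀ᶠ n : ℕ in atTop, ∃! t : ℝ, 0 < t ∧ deriv h t = -σ n ^ 2) ∧
    ∀ t : ℕ → ℝ, (∀ᶠ n : ℕ in atTop, 0 < t n ∧ deriv h (t n) = -σ n ^ 2) →
      Tendsto (fun n => t n * (2 * σ n ^ 2)) atTop (nhds 1) ∧
      Tendsto (fun n => h (t n) - Real.log (σ n)
          - Real.log (Real.sqrt (2 * Real.pi) * z * f z)) atTop (nhds 0) := by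
  obtain ⟨A, hA⟩ := hbdd
  set g : ℝ → ℝ := fun u => f (z + z * u)
  have hg : Measurable g := hmeas.comp (by fun_prop)
  have hgA : ∀ u, ‖g u‖ ≤ A := fun u => (norm_of_nonneg (hnonneg _)).trans_le (hA _)
  have hg0 : ∀ u, 0 ≤ g u := fun u => hnonneg _
  have hgc : ContinuousAt g 0 := hcont.comp_of_eq (by fun_prop) (by simp)
  have hgpos : 0 < g 0 := by simpa [g] using hfz
  have hh : h = fun t => log (z * gaussMoment g 0 t) := by
    ext t
    simp [hdef, gaussMoment, g]
  have hsol : ∀ t, 0 < t → ∀ c, deriv h t = -c ↔ gaussMomentRatio g t = c := fun t ht c => by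
    rw [hh, deriv_log_mul_gaussMoment hg hgA hg0 hgc hgpos hz.ne' ht, neg_inj]
  have hσ2 : Tendsto (fun n => σ n ^ 2) atTop (𝓝 0) := by simpa using hσ0.pow 2
  refine ⟨?_, fun t ht => ?_⟩
  · filter_upwards [eventually_existsUnique_gaussMomentRatio_eq hg hgA hg0 hgc hgpos
      (fun n => pow_pos (hσpos n) 2) hσ2] with n hn
    rwa [existsUnique_congr fun t => and_congr_right fun ht => hsol t ht _]
  have hRt : ∀ᶠ n in atTop, 0 < t n ∧ gaussMomentRatio g (t n) = σ n ^ 2 :=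
    ht.mono fun n ⟨htn, hd⟩ => ⟨htn, (hsol _ htn _).1 hd⟩
  have htop : Tendsto t atTop atTop :=
    tendsto_atTop_of_tendsto_comp_nhds_zero
      (strictAntiOn_gaussMomentRatio hg hgA hg0 hgc hgpos).antitoneOn
      (fun _ => gaussMomentRatio_pos hg hgA hg0 hgc hgpos) (hRt.mono fun _ hn => hn.1)
      (hσ2.congr' (hRt.mono fun _ hn => hn.2.symm))
  constructor
  · have hlim := ((tendsto_mul_gaussMomentRatio hg hgA hgc hgpos).comp htop).const_mul 2
    rw [mul_one_div_cancel two_ne_zero] at hlim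
    refine hlim.congr' (hRt.mono fun n ⟨_, hRn⟩ => ?_)
    simp only [Function.comp, hRn]
    ring
  · refine ((tendsto_log_mul_gaussMoment_sub_log_sqrt hg hgA hg0 hgc hgpos hz.ne').comp
      htop).congr' (hRt.mono fun n ⟨_, hRn⟩ => ?_)
    simp only [Function.comp, hRn, sqrt_sq (hσpos n).le, hh, g, mul_zero, add_zero]

/-- If `σₙ → 0`, then for all large `n` there is a unique `tₙ > 0` with
`h'(tₙ) = -σₙ²`, where `h(t) = log(z ∫ e^{-tu²} f(z+zu) du)`; moreover
`tₙ ∼ 1/(2σₙ²)` and `h(tₙ) = log σₙ + log(√(2π) z f(z)) + o(1)`. -/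
theorem stmt_12 (f : ℝ → ℝ) (hmeas : Measurable f) (hnonneg : ∀ x, 0 ≤ f x)
    (hdens : ∫ x, f x = 1) (hbdd : ∃ A, ∀ x, f x ≤ A)
    (z : ℝ) (hz : 0 < z) (hcont : ContinuousAt f z) (hfz : 0 < f z)
    (h : ℝ → ℝ)
    (hdef : ∀ t, h t = Real.log (z * ∫ u, Real.exp (-t * u ^ 2) * f (z + z * u)))
    (σ : ℕ → ℝ) (hσpos : ∀ n, 0 < σ n) (hσ0 : Tendsto σ atTop (nhds 0)) :
    (∀ᶠ n : ℕ in atTop, ∃! t : ℝ, 0 < t ∧ deriv h t = -σ n ^ 2) ∧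
    ∀ t : ℕ → ℝ, (∀ᶠ n : ℕ in atTop, 0 < t n ∧ deriv h (t n) = -σ n ^ 2) →
      Tendsto (fun n => t n * (2 * σ n ^ 2)) atTop (nhds 1) ∧
      Tendsto (fun n => h (t n) - Real.log (σ n)
          - Real.log (Real.sqrt (2 * Real.pi) * z * f z)) atTop (nhds 0) :=
  stmt_12_general f hmeas hnonneg hbdd z hz hcont hfz h hdef σ hσpos hσ0
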